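/- arXiv:2006.07844 — 2 statements merged into one kernel-verified Lean document; each statement's English description precedes it below -/
import Mathlib

section
/- (Shtern's criterion, one direction) Let G be a topological group and μ : G → ℝ a homogeneous quasimorphism. If μ is bounded on some neighborhood of the identity, then μ is continuous. -/
theorem stmt_4 {G : Type*} [Group G] [TopologicalSpace G] [IsTopologicalGroup G]
    (μ : G → ℝ) (C : ℝ) (hC : 0 < C)
    (hdef : ∀ f g : G, |μ (f * g) - μ f - μ g| ≤ C)
    (hhom : ∀ (k : ℤ) (f : G), μ (f ^ k) = (k : ℝ) * μ f)
    (U : Set G) (hU : IsOpen U) (h1 : (1 : G) ∈ U)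
    (B : ℝ) (hB : ∀ u ∈ U, |μ u| ≤ B) :
    Continuous μ := by
  have hpow : ∀ (n : ℕ) (f : G), μ (f ^ n) = (n : ℝ) * μ f := by
    intro n f
    have := hhom (n : ℤ) f
    simpa using this
  have hB0 : 0 ≤ B := le_trans (abs_nonneg _) (hB 1 h1)
  -- μ is small near 1
  have key : ∀ δ : ℝ, 0 < δ → ∃ V ∈ nhds (1 : G), ∀ v ∈ V, |μ v| ≤ δ := by
    intro δ hδ
    obtain ⟨n, hn⟩ := exists_nat_gt (B / δ)
    have hnpos : 0 < (n : ℝ) := lt_of_le_of_lt (div_nonneg hB0 hδ.le) hn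
    refine ⟨(fun v => v ^ n) ⁻¹' U, ?_, ?_⟩
    · exact (hU.preimage (continuous_pow n)).mem_nhds (by simpa using h1)
    · intro v hv
      have h1 : |μ (v ^ n)| ≤ B := hB _ hv
      rw [hpow, abs_mul, abs_of_pos hnpos] at h1
      have : |μ v| ≤ B / n := (le_div_iff₀' hnpos).mpr h1
      calc |μ v| ≤ B / n := this
        _ ≤ δ := by
            rw [div_le_iff₀ hnpos]
            nlinarith [mul_lt_mul_of_pos_right hn hδ, div_mul_cancel₀ B hδ.ne']
  rw [continuous_iff_continuousAt]
  intro g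
  have : Filter.Tendsto (fun v => μ (g * v)) (nhds 1) (nhds (μ g)) := by
    rw [Metric.tendsto_nhds]
    intro ε hε
    obtain ⟨n, hn⟩ := exists_nat_gt (2 * C / ε)
    have hnpos : 0 < (n : ℝ) :=
      lt_of_le_of_lt (div_nonneg (by linarith) hε.le) hn
    have hCn : C < n * ε / 2 := by
      rw [lt_div_iff₀ (by norm_num : (0:ℝ) < 2)]
      calc C * 2 = (2 * C / ε) * ε := by field_simp
        _ < n * ε := by nlinarith
    -- the correction term
    set c : G → G := fun v => (g ^ n)⁻¹ * (g * v) ^ n with hc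
    have hcont : Filter.Tendsto c (nhds 1) (nhds 1) := by
      have : Continuous c := by continuity
      have h := this.tendsto 1
      simpa [hc] using h
    obtain ⟨V, hVmem, hV⟩ := key (n * ε / 2) (by positivity)
    filter_upwards [hcont hVmem] with v hv
    have hbound : |μ (c v)| ≤ n * ε / 2 := hV _ hv
    have hd := hdef (g ^ n) (c v)
    have hgc : g ^ n * c v = (g * v) ^ n := by
      simp [hc, mul_inv_cancel_left]
    rw [hgc, hpow, hpow] at hd
    -- |n * μ (g*v) - n * μ g - μ (c v)| ≤ C
    have habs : (n : ℝ) * |μ (g * v) - μ g| ≤ C + |μ (c v)| := by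
      have h1 : |(n : ℝ) * μ (g * v) - (n : ℝ) * μ g| ≤ C + |μ (c v)| := by
        have := abs_sub_abs_le_abs_sub ((n : ℝ) * μ (g * v) - (n : ℝ) * μ g - μ (c v))
          (- μ (c v))
        have h2 : |(n:ℝ) * μ (g*v) - (n:ℝ) * μ g|
            ≤ |(n:ℝ) * μ (g*v) - (n:ℝ) * μ g - μ (c v)| + |μ (c v)| := by
          have := abs_add_le ((n:ℝ) * μ (g*v) - (n:ℝ) * μ g - μ (c v)) (μ (c v))
          simpa using this
        linarith [hd, h2]
      calc (n : ℝ) * |μ (g * v) - μ g| = |(n : ℝ) * μ (g * v) - (n : ℝ) * μ g| := by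
            rw [← mul_sub, abs_mul, abs_of_pos hnpos]
        _ ≤ C + |μ (c v)| := h1
    have : (n : ℝ) * |μ (g * v) - μ g| < (n : ℝ) * ε := by
      calc (n : ℝ) * |μ (g * v) - μ g| ≤ C + |μ (c v)| := habs
        _ < n * ε / 2 + n * ε / 2 := by linarith
        _ = n * ε := by ring
    have hlt : |μ (g * v) - μ g| < ε := lt_of_mul_lt_mul_left this hnpos.le
    simpa [Real.dist_eq] using hlt
  have hmap : Filter.map (fun v => g * v) (nhds (1 : G)) = nhds g := by
    exact map_mul_left_nhds_one g
  unfold ContinuousAt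
  rw [← hmap, Filter.tendsto_map'_iff]
  exact this
end

section
/- (Abstract form of Theorem 6.6 / monotone Le Roux argument) Let (G, d) be a metric group (d right-invariant), γ : G → [0,∞) a function with γ(e) = 0, γ(g⁻¹) = γ(g), γ(gh) ≤ γ(g) + γ(h), and suppose: (a) sup_g γ(g) = ∞, and (b) there exist constants Λ > 0 and δ > 0 such that d(e, g) < δ implies γ(g) < Λ. Then for every R > 0 the set {g : γ(g) ≥ R} has nonempty interior in the topology induced by d. Moreover, if d_H is another bi-invariant metric on G with γ(g) ≤ d_H(e, g), then {g : d_H(e,g) ≥ R} has nonempty d-interior for every R > 0. -/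
theorem stmt_17 {G : Type*} [Group G] [MetricSpace G]
    (hright : ∀ g h k : G, dist (g * k) (h * k) = dist g h)
    (γ : G → ℝ) (hγ0 : ∀ g : G, 0 ≤ γ g) (hγe : γ 1 = 0)
    (hγsymm : ∀ g : G, γ g⁻¹ = γ g)
    (hγtri : ∀ g h : G, γ (g * h) ≤ γ g + γ h)
    (hunb : ∀ R : ℝ, ∃ g : G, R < γ g)
    (Λ δ : ℝ) (hΛ : 0 < Λ) (hδ : 0 < δ)
    (hloc : ∀ g : G, dist 1 g < δ → γ g < Λ)
    (dH : G → G → ℝ)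
    (hdH0 : ∀ g : G, dH g g = 0)
    (hdHpos : ∀ g h : G, g ≠ h → 0 < dH g h)
    (hdHsymm : ∀ g h : G, dH g h = dH h g)
    (hdHtri : ∀ g h k : G, dH g k ≤ dH g h + dH h k)
    (hdHbi : ∀ g h k : G, dH (k * g) (k * h) = dH g h ∧ dH (g * k) (h * k) = dH g h)
    (hγdH : ∀ g : G, γ g ≤ dH 1 g) :
    ∀ R : ℝ, 0 < R → ∃ (g : G) (ε : ℝ), 0 < ε ∧
      Metric.ball g ε ⊆ {h : G | R ≤ dH 1 h} := by
  intro R hR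
  obtain ⟨g, hg⟩ := hunb (R + Λ)
  refine ⟨g, δ, hδ, ?_⟩
  intro h hh
  simp only [Metric.mem_ball] at hh
  have h1 : dist 1 (h * g⁻¹) < δ := by
    have e1 := hright h g g⁻¹
    simp only [mul_inv_cancel] at e1
    rw [dist_comm, e1]
    exact hh
  have h2 : γ (h * g⁻¹) < Λ := hloc _ h1
  have h4 : γ (g * h⁻¹) = γ (h * g⁻¹) := by
    rw [← hγsymm (g * h⁻¹)]; simp [mul_inv_rev]
  have h3 : γ g ≤ γ (g * h⁻¹) + γ h := by
    have := hγtri (g * h⁻¹) h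
    simpa using this
  have := hγdH h
  simp only [Set.mem_setOf_eq]
  linarith
end
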